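/- Let k ≥ 2. If a position S = (x_1, ..., x_n) with x_3 ≤ 1 and β(S) even is a P-position in misère k-Bounded Greedy Nim, then (x_1, x_2) is k-nice. -/

import Mathlib

/-- One move in `k`-bounded greedy Nim on a descending-sorted list of heaps:
remove `t` stones with `1 ≤ t ≤ min x₁ k` from a heap with the largest
number of stones `x₁` (the head), and re-sort the result in descending order. -/
def BFollower (k : ℕ) (S S' : List ℕ) : Prop :=
  ∃ t : ℕ, 1 ≤ t ∧ t ≤ min S.headI k ∧
    S' = List.orderedInsert (· ≥ ·) (S.headI - t) S.tail

/-- One move in greedy Nim: remove any `t` stones with `1 ≤ t ≤ x₁` from a heap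
with the largest number of stones `x₁`, and re-sort in descending order. -/
def GFollower (S S' : List ℕ) : Prop :=
  ∃ t : ℕ, 1 ≤ t ∧ t ≤ S.headI ∧
    S' = List.orderedInsert (· ≥ ·) (S.headI - t) S.tail

theorem BFollower.sum_lt {k : ℕ} {S S' : List ℕ} (h : BFollower k S S') :
    S'.sum < S.sum := by
  obtain ⟨t, ht1, ht2, rfl⟩ := h
  have htx : t ≤ S.headI := le_trans ht2 (min_le_left _ _)
  match S with
  | [] => simp [List.headI] at htx; omega
  | a :: l =>
      have hperm := List.perm_orderedInsert (· ≥ ·) (a - t) l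
      have hsum : (List.orderedInsert (· ≥ ·) (a - t) l).sum = (a - t) + l.sum :=
        hperm.sum_eq
      simp only [List.headI, List.tail] at *
      simp [hsum]
      omega

theorem GFollower.sum_lt {S S' : List ℕ} (h : GFollower S S') :
    S'.sum < S.sum := by
  obtain ⟨t, ht1, ht2, rfl⟩ := h
  match S with
  | [] => simp [List.headI] at ht2; omega
  | a :: l =>
      have hperm := List.perm_orderedInsert (· ≥ ·) (a - t) l
      have hsum : (List.orderedInsert (· ≥ ·) (a - t) l).sum = (a - t) + l.sum :=
        hperm.sum_eq
      simp only [List.headI, List.tail] at *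
      simp [hsum]
      omega

/-- `S` is a P-position of `k`-bounded greedy Nim under the normal play
convention: the all-zero position is a P-position (it has no followers), and a
position is a P-position iff every follower is an N-position. -/
def NormalBP (k : ℕ) (S : List ℕ) : Prop :=
  ∀ S', BFollower k S S' → ¬ NormalBP k S'
termination_by S.sum
decreasing_by exact BFollower.sum_lt (by assumption)

/-- `S` is a P-position of `k`-bounded greedy Nim under the misère play
convention: the all-zero position is an N-position, and any other position is a
P-position iff every follower is an N-position. -/
def MisereBP (k : ℕ) (S : List ℕ) : Prop :=
  S.sum ≠ 0 ∧ ∀ S', BFollower k S S' → ¬ MisereBP k S'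
termination_by S.sum
decreasing_by exact BFollower.sum_lt (by assumption)

/-- Normal-play P-positions of greedy Nim. -/
def NormalGP (S : List ℕ) : Prop :=
  ∀ S', GFollower S S' → ¬ NormalGP S'
termination_by S.sum
decreasing_by exact GFollower.sum_lt (by assumption)

/-- Misère-play P-positions of greedy Nim. -/
def MisereGP (S : List ℕ) : Prop :=
  S.sum ≠ 0 ∧ ∀ S', GFollower S S' → ¬ MisereGP S'
termination_by S.sum
decreasing_by exact GFollower.sum_lt (by assumption)

/-- `R a` is the remainder of `a` modulo `k + 1`. -/
def R (k a : ℕ) : ℕ := a % (k + 1)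

/-- The `j`-th heap (1-based) of the position `S`. -/
def heap (S : List ℕ) (j : ℕ) : ℕ := S.getD (j - 1) 0

/-- `β(S)`: `0` if `x₃ = 0`, and `max { j : x_j = x₃ } - 2` otherwise. -/
noncomputable def beta (S : List ℕ) : ℕ :=
  if heap S 3 = 0 then 0
  else sSup {j : ℕ | 1 ≤ j ∧ j ≤ S.length ∧ heap S j = heap S 3} - 2

/-- `α(S)`: `0` if `x₁ = 0`, and `max { j : x_j = x₁ }` otherwise. -/
noncomputable def alpha (S : List ℕ) : ℕ :=
  if heap S 1 = 0 then 0
  else sSup {j : ℕ | 1 ≤ j ∧ j ≤ S.length ∧ heap S j = heap S 1}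

/-- The pair `(x₁, x₂)` (with `x₁ ≥ x₂`) is `k`-nice. -/
def KNice (k x₁ x₂ : ℕ) : Prop :=
  (R k x₁ = 0 ∧ R k x₂ = 1) ∨
  (R k (x₁ - x₂) = 0 ∧ 2 ≤ R k x₂) ∨
  (R k x₁ = 1 ∧ R k x₂ = 0)

/-- The triple `(x₁, x₂, x₃)` (with `x₁ ≥ x₂ ≥ x₃`) is `k`-good. -/
def KGood (k x₁ x₂ x₃ : ℕ) : Prop :=
  (R k (x₁ - x₂) = k ∧ R k (x₂ - x₃) = 0) ∨
  (R k (x₁ - x₂) = 0 ∧ 1 ≤ R k (x₂ - x₃) ∧ R k (x₂ - x₃) ≤ k - 1) ∨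
  (R k (x₁ - x₂) = 1 ∧ R k (x₂ - x₃) = k)


/-- The condition of the main theorem characterizing misère P-positions of
`k`-bounded greedy Nim. -/
noncomputable def MiserePCond (k : ℕ) (S : List ℕ) : Prop :=
  (heap S 3 ≤ 1 ∧ Even (beta S) ∧ KNice k (heap S 1) (heap S 2)) ∨
  (heap S 3 ≤ 1 ∧ Odd (beta S) ∧ R k (heap S 1 - heap S 2) = 0) ∨
  (2 ≤ heap S 3 ∧ Even (beta S) ∧ R k (heap S 1 - heap S 2) = 0) ∨
  (2 ≤ heap S 3 ∧ Odd (beta S) ∧ KGood k (heap S 1) (heap S 2) (heap S 3))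

/-!
A sorted position with `x₃ ≤ 1` has the shape `(a, b, 1, …, 1, 0, …, 0)` with `m` ones, and its
`β` is `m`. A move only acts on the triple `(a, b, m)`: it lowers `a`, which may drop below `b`
(the two heaps swap) or to `0` (a heap `1` then moves up into second place). By induction on
`a + b + m`, the misère P-positions of this triple game are those where `(a, b)` is `k`-nice if
`m` is even and `a ≡ b (mod k + 1)` if `m` is odd: no move leads from such a triple to another
one, and every other triple with `a ≥ 1` has a move into the set. Both facts are arithmetic on
residues mod `k + 1`.
-/

section Residues

variable {k : ℕ}

lemma R_lt (k x : ℕ) : R k x < k + 1 := Nat.mod_lt _ k.succ_pos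

lemma R_le (k x : ℕ) : R k x ≤ x := Nat.mod_le _ _

lemma R_eq_self_of_le {x : ℕ} (h : x ≤ k) : R k x = x := Nat.mod_eq_of_lt (Nat.lt_succ_of_le h)

lemma R_sub_add_R_eq_or {x y : ℕ} (h : y ≤ x) :
    R k (x - y) + R k y = R k x ∨ R k (x - y) + R k y = R k x + (k + 1) := by
  have := Nat.add_mod_add_ite (x - y) y (k + 1)
  rw [Nat.sub_add_cancel h] at this
  unfold R
  split_ifs at this <;> omega

lemma R_sub_R_self (k x : ℕ) : R k (x - R k x) = 0 :=
  Nat.sub_mod_eq_zero_of_mod_eq (Nat.mod_mod _ _).symm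

end Residues

def onesPos : ℕ × ℕ × ℕ → ℕ → List ℕ
  | (a, b, m), z => a :: b :: (List.replicate m 1 ++ List.replicate z 0)

/-- The two `x₃ ≤ 1` clauses of `MiserePCond` at `onesPos (a, b, m) z`, whose `β` is `m`. -/
def OnesPCond (k : ℕ) : ℕ × ℕ × ℕ → Prop
  | (a, b, m) => if Even m then KNice k a b else R k (a - b) = 0

def onesMove : ℕ × ℕ × ℕ → ℕ → ℕ × ℕ × ℕ
  | (a, b, m), t =>
    if b ≤ a - t then (a - t, b, m)
    else if 1 ≤ a - t then (b, a - t, m)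
    else if m = 0 then (b, 0, 0)
    else (b, 1, m - 1)

section TripleGame

variable {k a b m : ℕ}

lemma exists_onesMove_eq (t : ℕ) (hmb : m ≠ 0 → 1 ≤ b) :
    ∃ a' b' m', onesMove (a, b, m) t = (a', b', m') ∧ b' ≤ a' ∧ (m' ≠ 0 → 1 ≤ b') := by
  simp only [onesMove]
  split_ifs <;> refine ⟨_, _, _, rfl, ?_, ?_⟩ <;> omega

lemma one_le_of_onesPCond (hba : b ≤ a) (hmb : m ≠ 0 → 1 ≤ b) (hP : OnesPCond k (a, b, m)) :
    1 ≤ a := by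
  by_contra! ha
  obtain ⟨rfl, rfl, rfl⟩ : a = 0 ∧ b = 0 ∧ m = 0 := by omega
  simp [OnesPCond, KNice, R] at hP

/- Every condition involved is linear in the residues `R k ·` of the heaps and their differences;
the listed residue facts are what `omega` needs to settle each branch of `onesMove`. -/
lemma not_onesPCond_onesMove {t : ℕ} (hba : b ≤ a) (hP : OnesPCond k (a, b, m)) (ht : 1 ≤ t)
    (hta : t ≤ a) (htk : t ≤ k) : ¬ OnesPCond k (onesMove (a, b, m) t) := by
  have := R_sub_add_R_eq_or (k := k) hba
  have := R_sub_add_R_eq_or (k := k) hta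
  have := @R_sub_add_R_eq_or k (a - t) b
  have := @R_eq_self_of_le k t
  have := @R_eq_self_of_le k b
  have := @R_eq_self_of_le k (a - t)
  have := @R_eq_self_of_le k (b - (a - t))
  have := @R_eq_self_of_le k (b - 1)
  have := @R_eq_self_of_le k 1
  have := @R_eq_self_of_le k 0
  simp only [onesMove]
  split_ifs <;> simp only [OnesPCond, KNice, Nat.even_iff] at hP ⊢ <;> split_ifs at hP ⊢ <;> omega

lemma onesPCond_onesMove_R_sub (hba : b ≤ a) (h : ¬ Even m ∨ 2 ≤ R k b) :
    OnesPCond k (onesMove (a, b, m) (R k (a - b))) := by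
  have hle := R_le k (a - b)
  have hsub := R_sub_R_self k (a - b)
  rw [show a - b - R k (a - b) = a - R k (a - b) - b by omega] at hsub
  simp only [onesMove, if_pos (by omega : b ≤ a - R k (a - b)), OnesPCond, KNice]
  split_ifs with hm
  · exact Or.inr (Or.inl ⟨hsub, by tauto⟩)
  · exact hsub

/- Removing `R a` stones leaves a heap `≡ 0`; if it drops below `b`, it is `b - 1`. -/
lemma onesPCond_onesMove_R_of_R_eq_one (hba : b ≤ a) (hm : Even m) (hb : R k b = 1) :
    OnesPCond k (onesMove (a, b, m) (R k a)) := by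
  have := R_lt k a
  have := R_sub_R_self k a
  have := @R_sub_add_R_eq_or k b 1
  have := @R_sub_add_R_eq_or k (b - 1) (a - R k a)
  have := @R_eq_self_of_le k 1
  have := @R_eq_self_of_le k 0
  have := @R_eq_self_of_le k (b - 1 - (a - R k a))
  rw [Nat.even_iff] at hm
  simp only [onesMove]
  split_ifs <;> simp only [OnesPCond, KNice, Nat.even_iff] <;> split_ifs <;> omega

/- `R (a + k) ≡ a - 1`, so the move leaves a heap `≡ 1`, whether or not it drops below `b`. -/
lemma onesPCond_onesMove_R_add_of_R_eq_zero (hk : 2 ≤ k) (ha : 1 ≤ a) (hm : Even m)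
    (hb : R k b = 0) :
    OnesPCond k (onesMove (a, b, m) (R k (a + k))) := by
  have := R_sub_add_R_eq_or (k := k) (Nat.le_add_left k a)
  rw [Nat.add_sub_cancel] at this
  have := R_lt k (a + k)
  have := R_lt k (a - R k (a + k))
  have := @R_sub_add_R_eq_or k a (R k (a + k))
  have := @R_eq_self_of_le k (R k (a + k))
  have := @R_eq_self_of_le k k
  have := @R_eq_self_of_le k a
  rw [Nat.even_iff] at hm
  simp only [onesMove]
  split_ifs <;> simp only [OnesPCond, KNice, Nat.even_iff] <;> split_ifs <;> omega

lemma exists_onesPCond_onesMove (hk : 2 ≤ k) (hba : b ≤ a) (hN : ¬ OnesPCond k (a, b, m))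
    (ha : 1 ≤ a) : ∃ t, 1 ≤ t ∧ t ≤ a ∧ t ≤ k ∧ OnesPCond k (onesMove (a, b, m) t) := by
  have hlt := R_lt k (a - b)
  have hle := R_le k (a - b)
  simp only [OnesPCond, KNice] at hN
  split_ifs at hN with hm
  · have := R_lt k b
    rcases (by omega : R k b = 0 ∨ R k b = 1 ∨ 2 ≤ R k b) with hb | hb | hb
    · have := R_sub_add_R_eq_or (k := k) (Nat.le_add_left k a)
      rw [Nat.add_sub_cancel] at this
      have := R_lt k (a + k)
      have := @R_eq_self_of_le k k
      have := @R_eq_self_of_le k a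
      exact ⟨R k (a + k), by omega, by omega, by omega,
        onesPCond_onesMove_R_add_of_R_eq_zero hk ha hm hb⟩
    · exact ⟨R k a, by omega, R_le k a, by have := R_lt k a; omega,
        onesPCond_onesMove_R_of_R_eq_one hba hm hb⟩
    · exact ⟨R k (a - b), by omega, by omega, by omega, onesPCond_onesMove_R_sub hba (Or.inr hb)⟩
  · exact ⟨R k (a - b), by omega, by omega, by omega, onesPCond_onesMove_R_sub hba (Or.inl hm)⟩

theorem onesPCond_iff (hk : 2 ≤ k) (hba : b ≤ a) (hmb : m ≠ 0 → 1 ≤ b) :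
    OnesPCond k (a, b, m) ↔
      1 ≤ a ∧ ∀ t, 1 ≤ t → t ≤ a → t ≤ k → ¬ OnesPCond k (onesMove (a, b, m) t) := by
  refine ⟨fun hP => ⟨one_le_of_onesPCond hba hmb hP,
    fun t ht hta htk => not_onesPCond_onesMove hba hP ht hta htk⟩, ?_⟩
  rintro ⟨ha, hall⟩
  by_contra hN
  obtain ⟨t, ht, hta, htk, hPt⟩ := exists_onesPCond_onesMove hk hba hN ha
  exact hall t ht hta htk hPt

end TripleGame

lemma getD_replicate_one_append_replicate_zero (m z i : ℕ) :
    (List.replicate m 1 ++ List.replicate z 0).getD i 0 = if i < m then 1 else 0 := by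
  rcases lt_or_ge i m with h | h
  · rw [List.getD_append _ _ _ _ (by simpa using h), List.getD_replicate _ h, if_pos h]
  · rw [List.getD_append_right _ _ _ _ (by simpa using h)]
    simp [h]

lemma orderedInsert_zero_replicate (m z : ℕ) :
    (List.replicate m 1 ++ List.replicate z 0).orderedInsert (· ≥ ·) 0 =
      List.replicate m 1 ++ List.replicate (z + 1) 0 := by
  induction m with
  | zero => cases z <;> simp [List.replicate_succ]
  | succ m ih => simp [List.replicate_succ, ih]

lemma orderedInsert_replicate_of_one_le {x : ℕ} (hx : 1 ≤ x) (m z : ℕ) :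
    (List.replicate m 1 ++ List.replicate z 0).orderedInsert (· ≥ ·) x =
      x :: (List.replicate m 1 ++ List.replicate z 0) := by
  cases m <;> cases z <;> simp [List.replicate_succ, hx]

lemma orderedInsert_onesPos (a b m t z : ℕ) :
    ∃ z', (onesPos (a, b, m) z).tail.orderedInsert (· ≥ ·) (a - t) =
      onesPos (onesMove (a, b, m) t) z' := by
  simp only [onesPos, List.tail, onesMove, List.orderedInsert_cons]
  split_ifs with h1 h2 h3
  · exact ⟨z, rfl⟩
  · exact ⟨z, by rw [orderedInsert_replicate_of_one_le h2]⟩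
  · subst h3
    exact ⟨z, by rw [Nat.eq_zero_of_not_pos h2, orderedInsert_zero_replicate]; rfl⟩
  · refine ⟨z + 1, ?_⟩
    obtain ⟨m, rfl⟩ := Nat.exists_eq_succ_of_ne_zero h3
    rw [Nat.eq_zero_of_not_pos h2, orderedInsert_zero_replicate]
    rfl

lemma sum_onesPos (a b m z : ℕ) : (onesPos (a, b, m) z).sum = a + b + m := by
  simp [onesPos, List.sum_replicate, add_assoc]

theorem misereBP_onesPos_iff {k : ℕ} (hk : 2 ≤ k) {a b m : ℕ} (z : ℕ) (hba : b ≤ a)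
    (hmb : m ≠ 0 → 1 ≤ b) : MisereBP k (onesPos (a, b, m) z) ↔ OnesPCond k (a, b, m) := by
  induction hs : a + b + m using Nat.strong_induction_on generalizing a b m z with
  | _ s ih =>
  have hmove : ∀ t, 1 ≤ t → t ≤ a → ∃ z',
      (onesPos (a, b, m) z).tail.orderedInsert (· ≥ ·) (a - t) =
        onesPos (onesMove (a, b, m) t) z' ∧
      (MisereBP k (onesPos (onesMove (a, b, m) t) z') ↔ OnesPCond k (onesMove (a, b, m) t)) := by
    intro t ht hta
    obtain ⟨z', hz'⟩ := orderedInsert_onesPos a b m t z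
    obtain ⟨a', b', m', hq, hba', hmb'⟩ := exists_onesMove_eq t hmb
    have hsum := (List.perm_orderedInsert (· ≥ ·) (a - t) (onesPos (a, b, m) z).tail).sum_eq
    have htail := sum_onesPos a b m z
    rw [hz', hq, sum_onesPos] at hsum
    rw [hq] at hz' ⊢
    simp only [onesPos, List.tail, List.sum_cons] at hsum htail
    exact ⟨z', hz', ih _ (by omega) z' hba' hmb' rfl⟩
  rw [MisereBP, onesPCond_iff hk hba hmb, sum_onesPos]
  refine and_congr (by omega) ⟨fun h t ht hta htk => ?_, ?_⟩
  · obtain ⟨z', hz', hiff⟩ := hmove t ht hta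
    rw [← hiff]
    exact h _ ⟨t, ht, le_min hta htk, hz'.symm⟩
  · rintro h S' ⟨t, ht, htak, rfl⟩
    obtain ⟨z', hz', hiff⟩ := hmove t ht (le_trans htak (min_le_left _ _))
    change ¬MisereBP k ((onesPos (a, b, m) z).tail.orderedInsert (· ≥ ·) (a - t))
    rw [hz', hiff]
    exact h t ht (le_trans htak (min_le_left _ _)) (le_trans htak (min_le_right _ _))

lemma heap_onesPos_of_three_le (a b m z : ℕ) {j : ℕ} (hj : 3 ≤ j) :
    heap (onesPos (a, b, m) z) j = if j < m + 3 then 1 else 0 := by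
  obtain ⟨i, rfl⟩ := Nat.exists_eq_add_of_le' hj
  rw [heap, show i + 3 - 1 = i + 1 + 1 by omega]
  simp only [onesPos, List.getD_cons_succ, getD_replicate_one_append_replicate_zero]
  simp

lemma beta_onesPos (a b m z : ℕ) : beta (onesPos (a, b, m) z) = m := by
  rw [beta, heap_onesPos_of_three_le a b m z le_rfl]
  rcases Nat.eq_zero_or_pos m with rfl | hm
  · simp
  have hmax : IsGreatest {j | 1 ≤ j ∧ j ≤ (onesPos (a, b, m) z).length ∧
      heap (onesPos (a, b, m) z) j = 1} (m + 2) := by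
    refine ⟨⟨by omega, by simp [onesPos], ?_⟩, ?_⟩
    · rw [heap_onesPos_of_three_le a b m z (by omega)]; simp
    · rintro j ⟨-, -, hj⟩
      by_contra! hlt
      rw [heap_onesPos_of_three_le a b m z (by omega), if_neg (by omega)] at hj
      omega
  rw [if_pos (show 3 < m + 3 by omega), if_neg one_ne_zero, hmax.csSup_eq]
  omega

lemma eq_replicate_one_append_replicate_zero {T : List ℕ} (hs : T.Pairwise (· ≥ ·))
    (h1 : ∀ x ∈ T, x ≤ 1) : ∃ m z, T = List.replicate m 1 ++ List.replicate z 0 := by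
  induction T with
  | nil => exact ⟨0, 0, rfl⟩
  | cons x T ih =>
    rw [List.pairwise_cons] at hs
    obtain ⟨m, z, rfl⟩ := ih hs.2 fun y hy => h1 y (List.mem_cons_of_mem x hy)
    rcases (by have := h1 x List.mem_cons_self; omega : x = 0 ∨ x = 1) with rfl | rfl
    · obtain rfl : m = 0 := by
        by_contra hm
        have := hs.1 1 (List.mem_append_left _ (List.mem_replicate.2 ⟨hm, rfl⟩))
        omega
      exact ⟨0, z + 1, rfl⟩
    · exact ⟨m + 1, z, rfl⟩

lemma exists_eq_onesPos {S : List ℕ} (hn : 2 ≤ S.length) (hs : S.Pairwise (· ≥ ·))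
    (h3 : heap S 3 ≤ 1) : ∃ a b m z, S = onesPos (a, b, m) z ∧ b ≤ a ∧ (m ≠ 0 → 1 ≤ b) := by
  obtain ⟨a, b, T, rfl⟩ : ∃ a b T, S = a :: b :: T := by
    match S, hn with
    | a :: b :: T, _ => exact ⟨a, b, T, rfl⟩
  simp only [List.pairwise_cons, List.mem_cons] at hs
  have hT1 : ∀ x ∈ T, x ≤ 1 := by
    cases T with
    | nil => simp
    | cons c T =>
      have hc : c ≤ 1 := by simpa [heap] using h3
      have hTc := (List.pairwise_cons.1 hs.2.2).1
      rintro x (_ | ⟨_, hx⟩)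
      exacts [hc, (hTc x hx).trans hc]
  obtain ⟨m, z, rfl⟩ := eq_replicate_one_append_replicate_zero hs.2.2 hT1
  exact ⟨a, b, m, z, rfl, hs.1 b (Or.inl rfl),
    fun hm => hs.2.1 1 (List.mem_append_left _ (List.mem_replicate.2 ⟨hm, rfl⟩))⟩

theorem stmt12 (k : ℕ) (hk : 2 ≤ k) (S : List ℕ) (hn : 4 ≤ S.length) (hsorted : S.Pairwise (· ≥ ·))
    (h3 : heap S 3 ≤ 1) (hb : Even (beta S)) (hP : MisereBP k S) :
    KNice k (heap S 1) (heap S 2) := by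
  obtain ⟨a, b, m, z, rfl, hba, hmb⟩ := exists_eq_onesPos (by omega) hsorted h3
  rw [beta_onesPos] at hb
  have h := (misereBP_onesPos_iff hk z hba hmb).1 hP
  rwa [OnesPCond, if_pos hb] at h
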